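/- arXiv:2109.08646 — 3 statements merged into one kernel-verified Lean document; each statement's English description precedes it below -/
import Mathlib

section
/- Let G be a compact group, γ: G → [0,1] a Cayley function, and w the Cayley graphon w(x,y) = γ(xy⁻¹) with integral operator T_w on L²(G). Then for every f ∈ L²(G), T_w(f) = L(γ)f, where L(γ) = ∫_G γ(y) L(y) dy and L is the left regular representation (L(g)f)(h) = f(g⁻¹h). -/
/-!
A compact group is unimodular: right translates and the inverse of a Haar measure `μ` are again
left-invariant with the same finite total mass, so by uniqueness of Haar measure they equal `μ`.
With `μ` invariant under left translation and inversion, `y ↦ x y⁻¹` preserves `μ`, and this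
substitution turns `∫ γ(x y⁻¹) f(y) dy` into `∫ γ(y) f(y⁻¹ x) dy`.
-/

open MeasureTheory Measure

namespace MeasureTheory.Measure

variable {G : Type*} [Group G] [TopologicalSpace G] [IsTopologicalGroup G] [CompactSpace G]
  [MeasurableSpace G] [BorelSpace G]

theorem eq_of_isMulLeftInvariant_of_measure_univ_eq (μ' μ : Measure G) [IsHaarMeasure μ]
    [IsMulLeftInvariant μ'] [IsFiniteMeasureOnCompacts μ'] (huniv : μ' Set.univ = μ Set.univ) :
    μ' = μ := by
  have hsmul := isMulInvariant_eq_smul_of_compactSpace μ' μ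
  have hmass : (haarScalarFactor μ' μ : ENNReal) * μ Set.univ = 1 * μ Set.univ :=
    calc (haarScalarFactor μ' μ : ENNReal) * μ Set.univ
        = (haarScalarFactor μ' μ • μ) Set.univ := rfl
      _ = 1 * μ Set.univ := by rw [← hsmul, huniv, one_mul]
  rw [ENNReal.mul_left_inj (NeZero.ne _) (measure_ne_top _ _), ENNReal.coe_eq_one] at hmass
  rw [hsmul, hmass, one_smul]

theorem IsHaarMeasure.isMulRightInvariant_of_compactSpace (μ : Measure G) [IsHaarMeasure μ] :
    IsMulRightInvariant μ where
  map_mul_right_eq_self g :=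
    eq_of_isMulLeftInvariant_of_measure_univ_eq _ μ <| by
      rw [map_apply (measurable_mul_const g) MeasurableSet.univ, Set.preimage_univ]

theorem IsHaarMeasure.isInvInvariant_of_compactSpace (μ : Measure G) [IsHaarMeasure μ] :
    IsInvInvariant μ where
  inv_eq_self :=
    have := isMulRightInvariant_of_compactSpace μ
    eq_of_isMulLeftInvariant_of_measure_univ_eq _ μ <| by rw [inv_apply, Set.inv_univ]

end MeasureTheory.Measure

theorem stmt_2_general
    {G : Type*} [Group G] [TopologicalSpace G] [IsTopologicalGroup G]
    [CompactSpace G] [MeasurableSpace G] [BorelSpace G]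
    (μ : Measure G) [μ.IsHaarMeasure]
    (γ : G → ℝ)
    (f : G → ℂ) :
    ∀ᵐ x ∂μ,
      (∫ y, (γ (x * y⁻¹) : ℂ) * f y ∂μ) = ∫ y, (γ y : ℂ) * f (y⁻¹ * x) ∂μ := by
  have := IsHaarMeasure.isInvInvariant_of_compactSpace μ
  refine .of_forall fun x => ?_
  simpa [div_eq_mul_inv, mul_assoc] using
    integral_div_left_eq_self (fun y => (γ y : ℂ) * f (y⁻¹ * x)) μ x

/-- For the Cayley graphon `w(x,y) = γ(x y⁻¹)` on a compact group `G` with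
Haar probability measure, the integral operator agrees with the weak integral
`L(γ) = ∫ γ(y) L(y) dy` of the left regular representation `(L(g)f)(h) = f(g⁻¹ h)`:
for every `f ∈ L²(G)` and a.e. `x`, `T_w(f)(x) = ∫ γ(y) (L(y)f)(x) dy`. -/
theorem stmt_2
    {G : Type*} [Group G] [TopologicalSpace G] [IsTopologicalGroup G]
    [CompactSpace G] [MeasurableSpace G] [BorelSpace G]
    (μ : Measure G) [μ.IsHaarMeasure] [IsProbabilityMeasure μ]
    (γ : G → ℝ) (hmeas : Measurable γ) (h01 : ∀ x, γ x ∈ Set.Icc (0 : ℝ) 1)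
    (hsym : ∀ x, γ x = γ x⁻¹)
    (f : G → ℂ) (hf : MemLp f 2 μ) :
    ∀ᵐ x ∂μ,
      (∫ y, (γ (x * y⁻¹) : ℂ) * f y ∂μ) = ∫ y, (γ y : ℂ) * f (y⁻¹ * x) ∂μ :=
  stmt_2_general μ γ f
end

section
/- Let G be a compact group, γ a Cayley function, w(x,y)=γ(xy⁻¹), and π an irreducible unitary representation of G with coefficient functions π_{i,j}(x) = ⟨π(x)e_i, e_j⟩. Suppose Z = (z_1,…,z_{d_π}) is an eigenvector of the entrywise-conjugated matrix conj(π(γ)) with eigenvalue λ. Then for every 1 ≤ i ≤ d_π, the function φ = Σ_{j=1}^{d_π} z_j π_{i,j} satisfies T_w φ = λ φ. -/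
/-! Substituting `y = u⁻¹ x` turns `T_w φ (x)` into `∫ γ(u) φ(u⁻¹ x) du`, which is legitimate
because a Haar probability measure on a compact group is also right- and inversion-invariant.
Since `π(u⁻¹ x) = π(u)ᴴ π(x)`, this integral equals `∑ₖ (conj(π(γ)) Z)ₖ π_{k,i}(x)`, and the
eigenvector equation makes it `λ φ(x)`. -/

open MeasureTheory

/-- The matrix `π(γ) = ∫ γ(x) π(x) dx` (entrywise integral). -/
noncomputable def repMat {G : Type*} [Group G] [MeasurableSpace G]
    (μ : MeasureTheory.Measure G) (γ : G → ℝ) {d : ℕ}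
    (π : G →* Matrix.unitaryGroup (Fin d) ℂ) : Matrix (Fin d) (Fin d) ℂ :=
  Matrix.of fun i j => ∫ x, (γ x : ℂ) * ((π x : Matrix (Fin d) (Fin d) ℂ) i j) ∂μ

open ComplexConjugate

namespace MeasureTheory.Measure.IsHaarMeasure

variable {G : Type*} [Group G] [TopologicalSpace G] [IsTopologicalGroup G] [CompactSpace G]
  [MeasurableSpace G] [BorelSpace G] (μ : Measure G) [μ.IsHaarMeasure] [IsProbabilityMeasure μ]

theorem isMulRightInvariant_of_isProbabilityMeasure : μ.IsMulRightInvariant := by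
  refine ⟨fun g => ?_⟩
  have : IsProbabilityMeasure (μ.map (· * g)) :=
    isProbabilityMeasure_map (measurable_mul_const g).aemeasurable
  exact isHaarMeasure_eq_of_isProbabilityMeasure _ μ

theorem isInvInvariant_of_isProbabilityMeasure : μ.IsInvInvariant := by
  have := isMulRightInvariant_of_isProbabilityMeasure μ
  have : IsProbabilityMeasure μ.inv := isProbabilityMeasure_map measurable_inv.aemeasurable
  have : μ.inv.IsHaarMeasure := ⟨⟩
  exact ⟨isHaarMeasure_eq_of_isProbabilityMeasure μ.inv μ⟩

end MeasureTheory.Measure.IsHaarMeasure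

theorem integral_comp_inv_mul_eq_self {G E : Type*} [Group G] [MeasurableSpace G]
    [MeasurableMul G] [MeasurableInv G] [NormedAddCommGroup E] [NormedSpace ℝ E]
    (μ : Measure G) [μ.IsMulRightInvariant] [μ.IsInvInvariant] (f : G → E) (x : G) :
    ∫ u, f (u⁻¹ * x) ∂μ = ∫ u, f u ∂μ := by
  rw [integral_inv_eq_self (fun u => f (u * x)), integral_mul_right_eq_self]

theorem integral_finsetSum_mul_const {α ι 𝕜 : Type*} [MeasurableSpace α] [RCLike 𝕜]
    {μ : Measure α} (s : Finset ι) {f : ι → α → 𝕜} (hf : ∀ k ∈ s, Integrable (f k) μ)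
    (c : ι → 𝕜) : ∫ u, ∑ k ∈ s, f k u * c k ∂μ = ∑ k ∈ s, (∫ u, f k u ∂μ) * c k := by
  rw [integral_finsetSum s fun k hk => (hf k hk).mul_const (c k)]
  simp only [integral_mul_const]

theorem Matrix.mul_sum_mul_star_mul_apply {n R : Type*} [Fintype n] [CommSemiring R] [StarRing R]
    (c : R) (U P : Matrix n n R) (z : n → R) (i : n) :
    c * ∑ j, z j * (star U * P) j i = ∑ k, (∑ j, c * star (U k j) * z j) * P k i := by
  simp only [Matrix.mul_apply, Matrix.star_apply, Finset.mul_sum, Finset.sum_mul]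
  rw [Finset.sum_comm]
  exact Finset.sum_congr rfl fun _ _ => Finset.sum_congr rfl fun _ _ => by ring

section UnitaryRepresentation

variable {G : Type*} [Group G] {d : ℕ} (π : G →* Matrix.unitaryGroup (Fin d) ℂ)

theorem coe_map_inv_mul_eq_star_mul (u x : G) :
    (π (u⁻¹ * x) : Matrix (Fin d) (Fin d) ℂ) = star (π u : Matrix (Fin d) (Fin d) ℂ) * π x := by
  rw [map_mul, map_inv]; rfl

variable [MeasurableSpace G] (μ : Measure G)

theorem conj_repMat_apply (γ : G → ℝ) (k j : Fin d) :
    conj (repMat μ γ π k j) = ∫ u, (γ u : ℂ) * conj ((π u : Matrix (Fin d) (Fin d) ℂ) k j) ∂μ := by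
  simp only [repMat, Matrix.of_apply, ← integral_conj, map_mul, Complex.conj_ofReal]

theorem integrable_ofReal_mul_conj_apply [TopologicalSpace G] [OpensMeasurableSpace G]
    [IsFiniteMeasure μ] {γ : G → ℝ} (hγ : Measurable γ) (hγ1 : ∀ x, |γ x| ≤ 1)
    (hπ : Continuous fun g => (π g : Matrix (Fin d) (Fin d) ℂ)) (k j : Fin d) :
    Integrable (fun u => (γ u : ℂ) * conj ((π u : Matrix (Fin d) (Fin d) ℂ) k j)) μ := by
  refine Integrable.of_bound ?_ 1 (ae_of_all _ fun u => ?_)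
  · exact ((Complex.measurable_ofReal.comp hγ).mul
      (Complex.continuous_conj.comp (hπ.matrix_elem k j)).measurable).aestronglyMeasurable
  · rw [norm_mul, Complex.norm_real, RCLike.norm_conj, Real.norm_eq_abs]
    exact mul_le_one₀ (hγ1 u) (norm_nonneg _) (entry_norm_bound_of_unitary (π u).2 k j)

end UnitaryRepresentation

theorem stmt_6_general
    {G : Type*} [Group G] [TopologicalSpace G] [IsTopologicalGroup G]
    [CompactSpace G] [MeasurableSpace G] [BorelSpace G]
    (μ : Measure G) [μ.IsHaarMeasure] [IsProbabilityMeasure μ]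
    (γ : G → ℝ) (hmeas : Measurable γ) (h01 : ∀ x, γ x ∈ Set.Icc (0 : ℝ) 1)
    {d : ℕ} (π : G →* Matrix.unitaryGroup (Fin d) ℂ)
    (hcont : Continuous fun g => (π g : Matrix (Fin d) (Fin d) ℂ))
    (lam : ℂ) (z : Fin d → ℂ)
    (hz : Matrix.mulVec ((repMat μ γ π).map (starRingEnd ℂ)) z = lam • z)
    (i : Fin d) :
    ∀ x : G,
      (∫ y, (γ (x * y⁻¹) : ℂ) *
          (∑ j, z j * ((π y : Matrix (Fin d) (Fin d) ℂ) j i)) ∂μ)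
        = lam * ∑ j, z j * ((π x : Matrix (Fin d) (Fin d) ℂ) j i) := by
  have := Measure.IsHaarMeasure.isMulRightInvariant_of_isProbabilityMeasure μ
  have := Measure.IsHaarMeasure.isInvInvariant_of_isProbabilityMeasure μ
  have hint := integrable_ofReal_mul_conj_apply π μ hmeas
    (fun x => abs_le.2 ⟨by linarith [(h01 x).1], (h01 x).2⟩) hcont
  have hz' (k : Fin d) : ∑ j, conj (repMat μ γ π k j) * z j = lam * z k := congrFun hz k
  intro x
  calc (∫ y, (γ (x * y⁻¹) : ℂ) * (∑ j, z j * ((π y : Matrix (Fin d) (Fin d) ℂ) j i)) ∂μ)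
      = ∫ u, (γ u : ℂ) * ∑ j, z j * ((π (u⁻¹ * x) : Matrix (Fin d) (Fin d) ℂ) j i) ∂μ := by
        rw [← integral_comp_inv_mul_eq_self μ _ x]
        simp only [mul_inv_rev, inv_inv, mul_inv_cancel_left]
    _ = ∫ u, ∑ k, (∑ j, (γ u : ℂ) * conj ((π u : Matrix (Fin d) (Fin d) ℂ) k j) * z j) *
          (π x : Matrix (Fin d) (Fin d) ℂ) k i ∂μ := by
        simp only [coe_map_inv_mul_eq_star_mul, Matrix.mul_sum_mul_star_mul_apply, Complex.star_def]
    _ = ∑ k, (∑ j, conj (repMat μ γ π k j) * z j) * (π x : Matrix (Fin d) (Fin d) ℂ) k i := by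
        rw [integral_finsetSum_mul_const _
          fun k _ => integrable_finsetSum _ fun j _ => (hint k j).mul_const _]
        simp only [integral_finsetSum_mul_const _ fun j _ => hint _ j, conj_repMat_apply]
    _ = lam * ∑ j, z j * ((π x : Matrix (Fin d) (Fin d) ℂ) j i) := by
        simp only [hz', Finset.mul_sum, mul_assoc]

/-- Let `w(x,y) = γ(xy⁻¹)` be a Cayley graphon on a compact group `G` and
`π` a continuous unitary matrix representation, with coefficient functions
`π_{i,j}(x) = ⟨π(x)eᵢ, eⱼ⟩ = (π x)ⱼᵢ`.  If `Z = (z_j)` is an eigenvector of the entrywise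
conjugate of `π(γ)` with eigenvalue `λ`, then `φ = Σⱼ zⱼ π_{i,j}` satisfies `T_w φ = λ φ`. -/
theorem stmt_6
    {G : Type*} [Group G] [TopologicalSpace G] [IsTopologicalGroup G]
    [CompactSpace G] [MeasurableSpace G] [BorelSpace G]
    (μ : Measure G) [μ.IsHaarMeasure] [IsProbabilityMeasure μ]
    (γ : G → ℝ) (hmeas : Measurable γ) (h01 : ∀ x, γ x ∈ Set.Icc (0 : ℝ) 1)
    (hsym : ∀ x, γ x = γ x⁻¹)
    {d : ℕ} (π : G →* Matrix.unitaryGroup (Fin d) ℂ)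
    (hcont : Continuous fun g => (π g : Matrix (Fin d) (Fin d) ℂ))
    (lam : ℂ) (z : Fin d → ℂ)
    (hz : Matrix.mulVec ((repMat μ γ π).map (starRingEnd ℂ)) z = lam • z)
    (i : Fin d) :
    ∀ x : G,
      (∫ y, (γ (x * y⁻¹) : ℂ) *
          (∑ j, z j * ((π y : Matrix (Fin d) (Fin d) ℂ) j i)) ∂μ)
        = lam * ∑ j, z j * ((π x : Matrix (Fin d) (Fin d) ℂ) j i) :=
  stmt_6_general μ γ hmeas h01 π hcont lam z hz i
end

section
/- Let H be a Hilbert space, f ∈ H, and for each n ∈ ℕ let {P_{n,j}}_{j ∈ J} and {P_j}_{j ∈ J} be families of pairwise-orthogonal orthogonal projections on H (i.e., P_{n,j}P_{n,k} = 0 and P_jP_k = 0 for j ≠ k). Assume f = Σ_{j∈J} P_j(f) (convergent in H) and for every j ∈ J, ‖P_{n,j}(f) − P_j(f)‖ → 0 as n → ∞. Then Σ_{j∈J} ‖P_{n,j}(f) − P_j(f)‖² → 0 as n → ∞. -/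
/-! For each `n` the vectors `P_{n,j} f` satisfy Bessel's inequality
`Σ_j ‖P_{n,j} f‖² ≤ ‖f‖² = Σ_j ‖P_j f‖²`. So the terms `‖P_{n,j} f − P_j f‖²` are dominated by
`2‖P_{n,j} f‖² + 2‖P_j f‖²`, which converge termwise to `4‖P_j f‖²` while their sums never exceed
the limiting sum `4‖f‖²`. This is enough for a generalised dominated convergence theorem: applying
Fatou's argument to the nonnegative differences shows that no mass escapes to the tail. -/

open Filter Finset Topology
open scoped InnerProductSpace

theorem tendsto_tsum_zero_of_le_of_tendsto_of_sum_le {ι J : Type*} {l : Filter ι}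
    {d g : ι → J → ℝ} {G : J → ℝ} {s : ℝ} (hd : ∀ i j, 0 ≤ d i j) (hdg : ∀ i j, d i j ≤ g i j)
    (hd_lim : ∀ j, Tendsto (d · j) l (𝓝 0)) (hg_lim : ∀ j, Tendsto (g · j) l (𝓝 (G j)))
    (hG : HasSum G s) (hg_sum : ∀ i (F : Finset J), ∑ j ∈ F, g i j ≤ s) :
    Tendsto (fun i => ∑' j, d i j) l (𝓝 0) := by
  have hg_nonneg : ∀ i, 0 ≤ g i := fun i j => (hd i j).trans (hdg i j)
  have hg_summable : ∀ i, Summable (g i) := fun i => summable_of_sum_le (hg_nonneg i) (hg_sum i)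
  refine tendsto_order.2 ⟨fun a ha => .of_forall fun i => ha.trans_le (tsum_nonneg (hd i)),
    fun ε hε => ?_⟩
  obtain ⟨F, hF⟩ : ∃ F : Finset J, s - ε < ∑ j ∈ F, G j :=
    (hG.eventually (eventually_gt_nhds (sub_lt_self s hε))).exists
  have hlim : Tendsto (fun i => s - ∑ j ∈ F, (g i j - d i j)) l (𝓝 (s - ∑ j ∈ F, G j)) := by
    refine tendsto_const_nhds.sub (tendsto_finsetSum F fun j _ => ?_)
    simpa using (hg_lim j).sub (hd_lim j)
  filter_upwards [hlim.eventually (eventually_lt_nhds (sub_lt_comm.1 hF))] with i hi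
  have hgd_summable : Summable (fun j => g i j - d i j) :=
    (hg_summable i).of_nonneg_of_le (fun j => sub_nonneg.2 (hdg i j))
      (fun j => sub_le_self _ (hd i j))
  calc ∑' j, d i j = ∑' j, g i j - ∑' j, (g i j - d i j) := by
        rw [← (hg_summable i).tsum_sub hgd_summable]; simp
    _ ≤ s - ∑ j ∈ F, (g i j - d i j) := by
        gcongr
        · exact Real.tsum_le_of_sum_le (hg_nonneg i) (hg_sum i)
        · exact hgd_summable.sum_le_tsum F fun j _ => sub_nonneg.2 (hdg i j)
    _ < ε := hi

theorem IsStarProjection.finset_sum {R J : Type*} [NonUnitalNonAssocSemiring R] [StarRing R]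
    {p : J → R} (hp : ∀ j, IsStarProjection (p j)) (horth : ∀ j k, j ≠ k → p j * p k = 0)
    (F : Finset J) : IsStarProjection (∑ j ∈ F, p j) := by
  classical
  induction F using Finset.induction_on with
  | empty => simp [IsStarProjection.zero]
  | insert j F hj ih =>
    rw [sum_insert hj]
    refine (hp j).add ih ?_
    rw [mul_sum]
    exact sum_eq_zero fun k hk => horth j k (ne_of_mem_of_not_mem hk hj).symm

section InnerProductSpace

variable {𝕜 E J : Type*} [RCLike 𝕜] [NormedAddCommGroup E] [InnerProductSpace 𝕜 E] [CompleteSpace E]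

theorem IsStarProjection.norm_apply_sq_eq_re_inner {p : E →L[𝕜] E}
    (hp : IsStarProjection p) (x : E) : ‖p x‖ ^ 2 = RCLike.re ⟪x, p x⟫_𝕜 := by
  have hp' : p = star p * p := by rw [hp.isSelfAdjoint.star_eq, hp.isIdempotentElem.eq]
  conv_rhs => rw [hp', mul_apply_eq_comp, ContinuousLinearMap.star_eq_adjoint]
  rw [ContinuousLinearMap.adjoint_inner_right, inner_self_eq_norm_sq]

theorem sum_norm_sq_apply_le {Q : J → E →L[𝕜] E} (hQ : ∀ j, IsStarProjection (Q j))
    (horth : ∀ j k, j ≠ k → Q j * Q k = 0) (x : E) (F : Finset J) :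
    ∑ j ∈ F, ‖Q j x‖ ^ 2 ≤ ‖x‖ ^ 2 := by
  have hS := IsStarProjection.finset_sum hQ horth F
  calc ∑ j ∈ F, ‖Q j x‖ ^ 2 = ‖(∑ j ∈ F, Q j) x‖ ^ 2 := by
        rw [hS.norm_apply_sq_eq_re_inner]
        simp only [(hQ _).norm_apply_sq_eq_re_inner, _root_.sum_apply, inner_sum, map_sum]
    _ ≤ ‖x‖ ^ 2 := by
        gcongr
        simpa using (∑ j ∈ F, Q j).le_of_opNorm_le (hS.norm_le _) x

theorem hasSum_norm_sq_apply {P : J → E →L[𝕜] E} (hP : ∀ j, IsStarProjection (P j)) {x : E}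
    (hx : HasSum (fun j => P j x) x) : HasSum (fun j => ‖P j x‖ ^ 2) (‖x‖ ^ 2) := by
  simpa only [(hP _).norm_apply_sq_eq_re_inner, RCLike.reCLM_apply, innerSL_apply_apply,
    inner_self_eq_norm_sq] using RCLike.reCLM.hasSum ((innerSL 𝕜 x).hasSum hx)

end InnerProductSpace

theorem stmt_15_general
    {H : Type*} [NormedAddCommGroup H] [InnerProductSpace ℂ H] [CompleteSpace H]
    {J : Type*}
    (f : H) (P : J → H →L[ℂ] H) (Pn : ℕ → J → H →L[ℂ] H)
    (hP : ∀ j, IsIdempotentElem (P j)) (hPsa : ∀ j, IsSelfAdjoint (P j))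
    (hPn : ∀ n j, IsIdempotentElem (Pn n j)) (hPnsa : ∀ n j, IsSelfAdjoint (Pn n j))
    (horthn : ∀ n, ∀ j k, j ≠ k → Pn n j * Pn n k = 0)
    (hsum : HasSum (fun j => P j f) f)
    (hconv : ∀ j, Tendsto (fun n => ‖Pn n j f - P j f‖) atTop (nhds 0)) :
    Tendsto (fun n => ∑' j, ‖Pn n j f - P j f‖ ^ 2) atTop (nhds 0) := by
  have hPf : HasSum (fun j => ‖P j f‖ ^ 2) (‖f‖ ^ 2) :=
    hasSum_norm_sq_apply (fun j => ⟨hP j, hPsa j⟩) hsum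
  have hPnf (n : ℕ) (F : Finset J) : ∑ j ∈ F, ‖Pn n j f‖ ^ 2 ≤ ‖f‖ ^ 2 :=
    sum_norm_sq_apply_le (fun j => ⟨hPn n j, hPnsa n j⟩) (horthn n) f F
  have hlim (j : J) : Tendsto (fun n => Pn n j f) atTop (𝓝 (P j f)) :=
    tendsto_iff_norm_sub_tendsto_zero.2 (hconv j)
  refine tendsto_tsum_zero_of_le_of_tendsto_of_sum_le
    (g := fun n j => 2 * ‖Pn n j f‖ ^ 2 + 2 * ‖P j f‖ ^ 2) (fun _ _ => sq_nonneg _)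
    (fun n j => ?_) (fun j => by simpa using (hconv j).pow 2) (fun j => ?_) (hPf.mul_left 4)
    (fun n F => ?_)
  · calc ‖Pn n j f - P j f‖ ^ 2 ≤ (‖Pn n j f‖ + ‖P j f‖) ^ 2 := by gcongr; exact norm_sub_le _ _
      _ ≤ 2 * ‖Pn n j f‖ ^ 2 + 2 * ‖P j f‖ ^ 2 := by
        linarith [add_sq_le (a := ‖Pn n j f‖) (b := ‖P j f‖)]
  · convert (((hlim j).norm.pow 2).const_mul 2).add_const (2 * ‖P j f‖ ^ 2) using 2
    ring
  · rw [sum_add_distrib, ← mul_sum, ← mul_sum]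
    linarith [hPnf n F, sum_le_hasSum F (fun _ _ => sq_nonneg _) hPf]

/-- Let `f` be a vector in a Hilbert space, and for each `n` let
`{P_{n,j}}_{j∈J}` and `{P_j}_{j∈J}` be families of pairwise-orthogonal orthogonal projections
(`J` countable).  If `f = Σ_j P_j f` and for each `j`, `‖P_{n,j} f − P_j f‖ → 0`, then
`Σ_j ‖P_{n,j} f − P_j f‖² → 0` as `n → ∞`. -/
theorem stmt_15
    {H : Type*} [NormedAddCommGroup H] [InnerProductSpace ℂ H] [CompleteSpace H]
    {J : Type*} [Countable J]
    (f : H) (P : J → H →L[ℂ] H) (Pn : ℕ → J → H →L[ℂ] H)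
    (hP : ∀ j, IsIdempotentElem (P j)) (hPsa : ∀ j, IsSelfAdjoint (P j))
    (hPn : ∀ n j, IsIdempotentElem (Pn n j)) (hPnsa : ∀ n j, IsSelfAdjoint (Pn n j))
    (horth : ∀ j k, j ≠ k → P j * P k = 0)
    (horthn : ∀ n, ∀ j k, j ≠ k → Pn n j * Pn n k = 0)
    (hsum : HasSum (fun j => P j f) f)
    (hconv : ∀ j, Tendsto (fun n => ‖Pn n j f - P j f‖) atTop (nhds 0)) :
    Tendsto (fun n => ∑' j, ‖Pn n j f - P j f‖ ^ 2) atTop (nhds 0) :=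
  stmt_15_general f P Pn hP hPsa hPn hPnsa horthn hsum hconv
end
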